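/- Let G, G₀, G₁ be groups, let φ : G₁ → G be a surjective group homomorphism, and let ψ : G₀ → G be an injective group homomorphism. Assume that the commutator subgroup of G₁ is finitely generated, and assume that G has the Rapaport property: if the commutator subgroup of G is finitely generated then it is a free group. Then the commutator subgroup of G₀ is a free group. -/

import Mathlib

/-!
Commutator subgroups map onto commutator subgroups under surjections, so `[G, G]` is the image
of the finitely generated `[G₁, G₁]` and hence free by the Rapaport property. The injection `ψ`
embeds `[G₀, G₀]` into `[G, G]`, and a subgroup of a free group is free (Nielsen–Schreier).
-/

open Function

section

variable {G H : Type*} [Group G] [Group H]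

theorem map_commutator_eq_of_surjective {f : G →* H} (hf : Surjective f) :
    (commutator G).map f = commutator H := by
  simpa only [derivedSeries_one] using map_derivedSeries_eq hf 1

theorem map_commutator_le_commutator (f : G →* H) : (commutator G).map f ≤ commutator H := by
  simpa only [derivedSeries_one] using map_derivedSeries_le_derivedSeries f 1

theorem Group.fg_commutator_of_surjective {f : G →* H} (hf : Surjective f)
    (hG : Group.FG (commutator G)) : Group.FG (commutator H) := by
  rw [← map_commutator_eq_of_surjective hf]
  exact Group.fg_of_surjective (f.subgroupMap_surjective (commutator G))

theorem IsFreeGroup.of_injective [IsFreeGroup H] {f : G →* H} (hf : Injective f) :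
    IsFreeGroup G :=
  IsFreeGroup.ofMulEquiv (MonoidHom.ofInjective hf).symm

def MonoidHom.commutatorRestrict (f : G →* H) : commutator G →* commutator H :=
  (f.comp (commutator G).subtype).codRestrict (commutator H) fun x =>
    map_commutator_le_commutator f ⟨x, x.2, rfl⟩

theorem MonoidHom.commutatorRestrict_injective {f : G →* H} (hf : Injective f) :
    Injective f.commutatorRestrict := fun _ _ h =>
  Subtype.ext (hf (congrArg Subtype.val h))

end

/-- Silver's argument: given a surjection `φ : G₁ →* G` with the commutator
subgroup of `G₁` finitely generated, and an injection `ψ : G₀ →* G`, if `G`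
satisfies the Rapaport property (a finitely generated commutator subgroup of
`G` is free), then the commutator subgroup of `G₀` is a free group. -/
theorem commutator_free_of_ribbon_concordance
    {G G₀ G₁ : Type*} [Group G] [Group G₀] [Group G₁]
    (φ : G₁ →* G) (hφ : Function.Surjective φ)
    (ψ : G₀ →* G) (hψ : Function.Injective ψ)
    (hfg : Group.FG (commutator G₁))
    (hRapaport : Group.FG (commutator G) → IsFreeGroup (commutator G)) :
    IsFreeGroup (commutator G₀) := by
  have hfree : IsFreeGroup (commutator G) := hRapaport (Group.fg_commutator_of_surjective hφ hfg)
  exact IsFreeGroup.of_injective (MonoidHom.commutatorRestrict_injective hψ)
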